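/- arXiv:2602.04034 — 4 statements merged into one kernel-verified Lean document; each statement's English description precedes it below -/
import Mathlib

section
/- Let F be a field, k ≥ 1, let Y be a (k+1)×k matrix over F of rank k, and let a ∈ F^{k+1} with a ∉ columnSpace(Y). Then there exists a k×(k+1) matrix M over F of rank k such that for all (k+1)×k matrices X: M·X = Id_k if and only if X ∈ {Y + a·uᵀ : u ∈ F^k}. -/
theorem theta_is_solution_space (F : Type*) [Field F] (k : ℕ) (hk : 1 ≤ k)
    (Y : Matrix (Fin (k + 1)) (Fin k) F) (hY : Y.rank = k)
    (a : Fin (k + 1) → F) (ha : a ∉ LinearMap.range Y.mulVecLin) :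
    ∃ M : Matrix (Fin k) (Fin (k + 1)) F, M.rank = k ∧
      ∀ X : Matrix (Fin (k + 1)) (Fin k) F,
        M * X = 1 ↔ ∃ u : Fin k → F, X = Y + Matrix.vecMulVec a u := by
  classical
  -- B is Y with the column a appended
  set B : Matrix (Fin (k + 1)) (Fin (k + 1)) F :=
    Matrix.of fun i j => if h : (j : ℕ) < k then Y i ⟨j, h⟩ else a i with hB
  have hBY : ∀ i (j : Fin k), B i (Fin.castSucc j) = Y i j := by
    intro i j
    simp [hB, Matrix.of_apply, Fin.coe_castSucc, j.isLt]
  have hBa : ∀ i, B i (Fin.last k) = a i := by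
    intro i
    simp [hB, Matrix.of_apply]
  -- B is surjective as a linear map
  have hsurj : Function.Surjective B.mulVec := by
    have hrange : LinearMap.range B.mulVecLin = ⊤ := by
      set S := LinearMap.range Y.mulVecLin with hS
      set T := S ⊔ Submodule.span F {a} with hT
      have haT : a ∈ T := Submodule.mem_sup_right (Submodule.mem_span_singleton_self a)
      have hlt : S < T := lt_of_le_of_ne le_sup_left (by
        intro h
        exact ha (h ▸ haT))
      have hfinS : Module.finrank F S = k := hY
      have hfinT : Module.finrank F T = k + 1 := by
        have h1 : Module.finrank F S < Module.finrank F T :=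
          Submodule.finrank_lt_finrank_of_lt hlt
        have h2 : Module.finrank F T ≤ k + 1 := by
          have := Submodule.finrank_le T
          simpa using this
        omega
      have hTtop : T = ⊤ := by
        apply Submodule.eq_top_of_finrank_eq
        simpa using hfinT
      rw [eq_top_iff, ← hTtop]
      apply sup_le
      · rintro _ ⟨x, rfl⟩
        refine ⟨Fin.snoc x 0, ?_⟩
        simp only [Matrix.mulVecLin_apply]
        funext i
        rw [Matrix.mulVec, Matrix.mulVec]
        simp only [dotProduct]
        rw [Fin.sum_univ_castSucc]
        simp [hBY, hBa, Fin.snoc]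
      · rw [Submodule.span_singleton_le_iff_mem]
        refine ⟨Pi.single (Fin.last k) 1, ?_⟩
        simp only [Matrix.mulVecLin_apply]
        funext i
        rw [Matrix.mulVec]
        simp only [dotProduct]
        rw [Finset.sum_eq_single (Fin.last k)]
        · simp [hBa]
        · intro b _ hb; simp [Pi.single_apply, hb]
        · simp
    intro v
    have : v ∈ LinearMap.range B.mulVecLin := hrange ▸ Submodule.mem_top
    obtain ⟨w, hw⟩ := this
    exact ⟨w, hw⟩
  have hunit : IsUnit B := Matrix.mulVec_surjective_iff_isUnit.mp hsurj
  have hdet : IsUnit B.det := (Matrix.isUnit_iff_isUnit_det B).mp hunit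
  have hBiB : B⁻¹ * B = 1 := Matrix.nonsing_inv_mul B hdet
  have hBBi : B * B⁻¹ = 1 := Matrix.mul_nonsing_inv B hdet
  -- M is the first k rows of B⁻¹
  set M : Matrix (Fin k) (Fin (k + 1)) F := (B⁻¹).submatrix Fin.castSucc id with hM
  have hMY : M * Y = 1 := by
    ext i j
    have : (M * Y) i j = (B⁻¹ * B) (Fin.castSucc i) (Fin.castSucc j) := by
      rw [Matrix.mul_apply, Matrix.mul_apply]
      congr 1
      funext l
      rw [hM, Matrix.submatrix_apply, id_eq, hBY]
    rw [this, hBiB, Matrix.one_apply, Matrix.one_apply]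
    simp [Fin.castSucc_inj]
  have hMa : M.mulVec a = 0 := by
    funext i
    have : M.mulVec a i = (B⁻¹ * B) (Fin.castSucc i) (Fin.last k) := by
      rw [Matrix.mulVec, Matrix.mul_apply]
      simp only [dotProduct]
      congr 1
      funext l
      rw [hM, Matrix.submatrix_apply, id_eq, hBa]
    rw [this, hBiB, Matrix.one_apply]
    have : Fin.castSucc i ≠ Fin.last k := Fin.castSucc_lt_last i |>.ne
    simp [this]
  -- kernel of M is spanned by a
  have hker : ∀ v : Fin (k + 1) → F, M.mulVec v = 0 → ∃ c : F, v = fun i => c * a i := by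
    intro v hv
    set w := B⁻¹.mulVec v with hw
    have hwz : ∀ i : Fin k, w (Fin.castSucc i) = 0 := by
      intro i
      have : M.mulVec v i = w (Fin.castSucc i) := by
        rw [hw, Matrix.mulVec, Matrix.mulVec]
        simp only [dotProduct]
        rfl
      rw [← this, hv]
      rfl
    have hvBw : v = B.mulVec w := by
      rw [hw, Matrix.mulVec_mulVec, hBBi, Matrix.one_mulVec]
    refine ⟨w (Fin.last k), ?_⟩
    funext i
    rw [hvBw]
    rw [Matrix.mulVec]
    simp only [dotProduct]
    rw [Fin.sum_univ_castSucc]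
    simp [hwz, hBa, mul_comm]
  refine ⟨M, ?_, ?_⟩
  · -- rank
    refine le_antisymm ?_ ?_
    · simpa using M.rank_le_card_height
    · calc k = (1 : Matrix (Fin k) (Fin k) F).rank := by simp [Matrix.rank_one]
        _ = (M * Y).rank := by rw [hMY]
        _ ≤ M.rank := Matrix.rank_mul_le_left M Y
  · intro X
    constructor
    · intro hX
      have hcol : ∀ j : Fin k, ∃ c : F, (fun i => X i j - Y i j) = fun i => c * a i := by
        intro j
        apply hker
        funext i
        have : M.mulVec (fun l => X l j - Y l j) i = (M * X) i j - (M * Y) i j := by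
          rw [Matrix.mulVec, Matrix.mul_apply, Matrix.mul_apply]
          simp only [dotProduct, mul_sub]
          rw [Finset.sum_sub_distrib]
        rw [this, hX, hMY]
        simp
      choose u hu using hcol
      refine ⟨u, ?_⟩
      ext i j
      have := congrFun (hu j) i
      simp only [Matrix.add_apply, Matrix.vecMulVec_apply]
      linear_combination this
    · rintro ⟨u, rfl⟩
      rw [Matrix.mul_add, hMY]
      have : M * Matrix.vecMulVec a u = 0 := by
        ext i j
        rw [Matrix.mul_apply]
        simp only [Matrix.vecMulVec_apply]
        have : ∑ l, M i l * (a l * u j) = (∑ l, M i l * a l) * u j := by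
          rw [Finset.sum_mul]
          congr 1
          funext l
          ring
        rw [this]
        have hMa' : ∑ l, M i l * a l = 0 := by
          have := congrFun hMa i
          rw [Matrix.mulVec] at this
          simpa [dotProduct] using this
        simp [hMa']
      rw [this, add_zero]
end

section
/- Let F be a field and k ≥ 1. If θ(X₁,a₁) and θ(X₂,a₂) are two θ-spaces in F^{(k+1)×k}, then either they are equal, or their intersection contains at most one matrix. -/
/-- The θ-space determined by a matrix `X` and a vector `a`. -/
def theta {F : Type*} [Field F] {k : ℕ} (X : Matrix (Fin (k + 1)) (Fin k) F)
    (a : Fin (k + 1) → F) : Set (Matrix (Fin (k + 1)) (Fin k) F) :=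
  {Z | ∃ u : Fin k → F, Z = X + Matrix.vecMulVec a u}

theorem theta_spaces_almost_disjoint (F : Type*) [Field F] (k : ℕ) (hk : 1 ≤ k)
    (X₁ X₂ : Matrix (Fin (k + 1)) (Fin k) F) (hX₁ : X₁.rank = k) (hX₂ : X₂.rank = k)
    (a₁ a₂ : Fin (k + 1) → F)
    (ha₁ : a₁ ∉ LinearMap.range X₁.mulVecLin) (ha₂ : a₂ ∉ LinearMap.range X₂.mulVecLin) :
    theta X₁ a₁ = theta X₂ a₂ ∨ (theta X₁ a₁ ∩ theta X₂ a₂).Subsingleton := by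
  by_cases h : (theta X₁ a₁ ∩ theta X₂ a₂).Subsingleton
  · exact Or.inr h
  left
  rw [Set.not_subsingleton_iff] at h
  obtain ⟨M, hM, M', hM', hne⟩ := h
  obtain ⟨u₁, hu₁⟩ := hM.1
  obtain ⟨u₂, hu₂⟩ := hM.2
  obtain ⟨v₁, hv₁⟩ := hM'.1
  obtain ⟨v₂, hv₂⟩ := hM'.2
  have hd1 : ∀ i j, M i j - M' i j = a₁ i * (u₁ j - v₁ j) := by
    intro i j; rw [hu₁, hv₁]
    simp [Matrix.add_apply, Matrix.vecMulVec_apply]; ring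
  have hd2 : ∀ i j, M i j - M' i j = a₂ i * (u₂ j - v₂ j) := by
    intro i j; rw [hu₂, hv₂]
    simp [Matrix.add_apply, Matrix.vecMulVec_apply]; ring
  have key : ∀ i j, a₁ i * (u₁ j - v₁ j) = a₂ i * (u₂ j - v₂ j) := by
    intro i j; rw [← hd1, hd2]
  obtain ⟨i0, j0, hij⟩ : ∃ i j, a₁ i * (u₁ j - v₁ j) ≠ 0 := by
    by_contra hcon
    push_neg at hcon
    apply hne
    ext i j
    have := hd1 i j
    rw [hcon i j] at this
    exact sub_eq_zero.mp this
  have hd2j0 : u₂ j0 - v₂ j0 ≠ 0 := by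
    intro h0
    rw [key i0 j0, h0, mul_zero] at hij
    exact hij rfl
  set c : F := (u₁ j0 - v₁ j0) / (u₂ j0 - v₂ j0) with hc
  have ha₂c : ∀ i, a₂ i = c * a₁ i := by
    intro i
    rw [hc]
    field_simp
    linear_combination -key i j0
  have hcne : c ≠ 0 := by
    intro h0
    have := ha₂c i0
    rw [h0, zero_mul] at this
    rw [key i0 j0, this, zero_mul] at hij
    exact hij rfl
  have hX2 : ∀ i j, X₂ i j = X₁ i j + a₁ i * u₁ j - a₂ i * u₂ j := by
    intro i j
    have h1 : M i j = X₁ i j + a₁ i * u₁ j := by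
      rw [hu₁]; simp [Matrix.add_apply, Matrix.vecMulVec_apply]
    have h2 : M i j = X₂ i j + a₂ i * u₂ j := by
      rw [hu₂]; simp [Matrix.add_apply, Matrix.vecMulVec_apply]
    linear_combination h1 - h2
  ext Z
  simp only [theta, Set.mem_setOf_eq]
  constructor
  · rintro ⟨w, rfl⟩
    refine ⟨u₂ + c⁻¹ • (w - u₁), ?_⟩
    ext i j
    simp only [Matrix.add_apply, Matrix.vecMulVec_apply, Pi.add_apply, Pi.smul_apply,
      Pi.sub_apply, smul_eq_mul]
    rw [hX2 i j, ha₂c i]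
    field_simp
    ring
  · rintro ⟨w, rfl⟩
    refine ⟨u₁ + c • (w - u₂), ?_⟩
    ext i j
    simp only [Matrix.add_apply, Matrix.vecMulVec_apply, Pi.add_apply, Pi.smul_apply,
      Pi.sub_apply, smul_eq_mul]
    rw [hX2 i j, ha₂c i]
    ring
end

section
/- Let F be a field and k ≥ 1. If X₁ ≠ X₂ are two distinct (k+1)×k matrices over F, then there is at most one θ-space containing both X₁ and X₂. -/
open Matrix

theorem Matrix.exists_smul_eq_of_vecMulVec_eq {F m n : Type*} [Field F] {a a' : m → F}
    {u u' : n → F} (h : vecMulVec a u = vecMulVec a' u') (hne : vecMulVec a u ≠ 0) :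
    ∃ c : F, c ≠ 0 ∧ a' = c • a := by
  have ha' : a' ≠ 0 := fun h0 => hne (by simp [h, h0])
  have hu' : u' ≠ 0 := fun h0 => hne (by rw [h, h0]; ext; simp [vecMulVec_apply])
  obtain ⟨j, hj⟩ := Function.ne_iff.mp hu'
  have hcol : u j • a = u' j • a' := by
    simpa only [col_vecMulVec, op_smul_eq_smul] using congr_arg (col · j) h
  have ha'_eq : a' = ((u' j)⁻¹ * u j) • a := by rw [← smul_smul, hcol, inv_smul_smul₀ hj]
  exact ⟨_, fun hc => ha' (by rw [ha'_eq, hc, zero_smul]), ha'_eq⟩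

section Theta

variable {F : Type*} [Field F] {k : ℕ}

theorem theta_eq_of_mem {Y X : Matrix (Fin (k + 1)) (Fin k) F} {a : Fin (k + 1) → F}
    (h : X ∈ theta Y a) : theta Y a = theta X a := by
  obtain ⟨w, rfl⟩ := h
  ext Z
  constructor
  · rintro ⟨u, rfl⟩
    exact ⟨u - w, by rw [vecMulVec_sub, add_add_sub_cancel]⟩
  · rintro ⟨u, rfl⟩
    exact ⟨w + u, by rw [vecMulVec_add, add_assoc]⟩

theorem theta_smul {X : Matrix (Fin (k + 1)) (Fin k) F} {a : Fin (k + 1) → F} {c : F}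
    (hc : c ≠ 0) : theta X (c • a) = theta X a := by
  ext Z
  constructor
  · rintro ⟨u, rfl⟩
    exact ⟨c • u, by rw [smul_vecMulVec, vecMulVec_smul]⟩
  · rintro ⟨u, rfl⟩
    exact ⟨c⁻¹ • u, by rw [smul_vecMulVec, vecMulVec_smul, smul_smul, mul_inv_cancel₀ hc,
      one_smul]⟩

end Theta

theorem at_most_one_theta_space_through_two_points_general (F : Type*) [Field F] (k : ℕ)
    (X₁ X₂ : Matrix (Fin (k + 1)) (Fin k) F) (hne : X₁ ≠ X₂)
    (Y Y' : Matrix (Fin (k + 1)) (Fin k) F)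
    (a a' : Fin (k + 1) → F)
    (h1 : X₁ ∈ theta Y a) (h2 : X₂ ∈ theta Y a)
    (h1' : X₁ ∈ theta Y' a') (h2' : X₂ ∈ theta Y' a') :
    theta Y a = theta Y' a' := by
  obtain ⟨u, hu⟩ : X₂ ∈ theta X₁ a := theta_eq_of_mem h1 ▸ h2
  obtain ⟨u', hu'⟩ : X₂ ∈ theta X₁ a' := theta_eq_of_mem h1' ▸ h2'
  have hdiff : vecMulVec a u = vecMulVec a' u' := by rw [← add_right_inj X₁, ← hu, ← hu']
  have hdiff_ne : vecMulVec a u ≠ 0 := fun h0 => hne (by rw [hu, h0, add_zero])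
  obtain ⟨c, hc, rfl⟩ := exists_smul_eq_of_vecMulVec_eq hdiff hdiff_ne
  rw [theta_eq_of_mem h1, theta_eq_of_mem h1', theta_smul hc]

theorem at_most_one_theta_space_through_two_points (F : Type*) [Field F] (k : ℕ)
    (hk : 1 ≤ k) (X₁ X₂ : Matrix (Fin (k + 1)) (Fin k) F) (hne : X₁ ≠ X₂)
    (Y Y' : Matrix (Fin (k + 1)) (Fin k) F) (hY : Y.rank = k) (hY' : Y'.rank = k)
    (a a' : Fin (k + 1) → F)
    (ha : a ∉ LinearMap.range Y.mulVecLin) (ha' : a' ∉ LinearMap.range Y'.mulVecLin)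
    (h1 : X₁ ∈ theta Y a) (h2 : X₂ ∈ theta Y a)
    (h1' : X₁ ∈ theta Y' a') (h2' : X₂ ∈ theta Y' a') :
    theta Y a = theta Y' a' :=
  at_most_one_theta_space_through_two_points_general F k X₁ X₂ hne Y Y' a a' h1 h2 h1' h2'
end

section
/- Let A and B be sets with |A|, |B| ≥ 2, let n < k, and suppose there exist a function s : B → B and a map r : A^k → A^k factoring through A^n such that f(x) = s(f(r(x))) for every function f : A^k → B and every x ∈ A^k. Then a contradiction follows; i.e., no such s and r exist. -/
theorem no_unary_uniform_generation (A B : Type*) [Fintype A]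
    (hA : 2 ≤ Fintype.card A) (hB : ∃ b₁ b₂ : B, b₁ ≠ b₂)
    (n k : ℕ) (hnk : n < k)
    (h : ∃ (s : B → B) (r : (Fin k → A) → (Fin k → A))
        (w : (Fin k → A) → (Fin n → A)) (v : (Fin n → A) → (Fin k → A)),
        r = v ∘ w ∧ ∀ (f : (Fin k → A) → B) (x : Fin k → A), f x = s (f (r x))) :
    False := by
  classical
  obtain ⟨b₁, b₂, hb⟩ := hB
  obtain ⟨s, r, w, v, hr, hgen⟩ := h
  have hinj : Function.Injective r := by
    intro x y hxy
    by_contra hne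
    have h1 := hgen (fun z => if z = x then b₁ else b₂) x
    have h2 := hgen (fun z => if z = x then b₁ else b₂) y
    rw [hxy] at h1
    simp only [if_pos rfl] at h1
    rw [← h1] at h2
    simp only [if_neg (Ne.symm hne)] at h2
    exact hb h2.symm
  have hw : Function.Injective w := by
    intro a b hab
    apply hinj
    rw [hr]
    simp [Function.comp, hab]
  have hcard := Fintype.card_le_of_injective w hw
  simp only [Fintype.card_fun, Fintype.card_fin] at hcard
  have hlt : Fintype.card A ^ n < Fintype.card A ^ k :=
    Nat.pow_lt_pow_right (by omega) hnk
  omega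
end
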